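/- Let λ ∈ ℝ. For all integers n ≥ k ≥ 0, the degenerate Stirling numbers of the second kind admit the multinomial representation: {n \brace k}_λ = (1/k!) Σ_{l₁+⋯+l_k = n, each lᵢ ≥ 1} C(n; l₁,…,l_k) ∏_{i=1}^{k} (1)_{l_i,λ}, where the sum is over all k-tuples (l₁,…,l_k) of positive integers with l₁+⋯+l_k = n and C(n; l₁,…,l_k) = n!/(l₁!⋯l_k!) is the multinomial coefficient. -/
import Mathlib


open Finset

/-- The degenerate falling factorial `(x)_{n,λ} = ∏_{i=0}^{n-1} (x - iλ)`. -/
noncomputable def degFall (lam x : ℝ) (n : ℕ) : ℝ :=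
  ∏ i ∈ Finset.range n, (x - (i : ℝ) * lam)

/-- The degenerate Stirling numbers of the second kind
`{n \brace k}_λ = (1/k!) ∑_{j=0}^{k} (-1)^{k-j} C(k,j) (j)_{n,λ}`. -/
noncomputable def degStirling (lam : ℝ) (n k : ℕ) : ℝ :=
  (1 / (Nat.factorial k : ℝ)) * ∑ j ∈ Finset.range (k + 1),
    (-1 : ℝ) ^ (k - j) * (Nat.choose k j : ℝ) * degFall lam (j : ℝ) n

lemma degFall_zero (lam x : ℝ) : degFall lam x 0 = 1 := by simp [degFall]

lemma degFall_succ (lam x : ℝ) (n : ℕ) :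
    degFall lam x (n + 1) = degFall lam x n * (x - n * lam) := by
  simp [degFall, Finset.prod_range_succ]

lemma degFall_zero_left (lam : ℝ) (n : ℕ) : degFall lam 0 (n + 1) = 0 := by
  apply Finset.prod_eq_zero (Finset.mem_range.mpr (Nat.succ_pos n))
  simp

lemma degFall_add (lam x y : ℝ) (n : ℕ) :
    degFall lam (x + y) n =
      ∑ m ∈ Finset.range (n + 1),
        (n.choose m : ℝ) * degFall lam x m * degFall lam y (n - m) := by
  induction n with
  | zero => simp [degFall]
  | succ n ih =>
    set t : ℕ → ℕ → ℝ :=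
      fun N m => (N.choose m : ℝ) * degFall lam x m * degFall lam y (N - m) with ht
    have h_first : ∀ N : ℕ, t N 0 = degFall lam y N := by
      intro N; simp [ht, degFall_zero]
    have h_last : t n (n + 1) = 0 := by simp [ht]
    have h_middle : ∀ i ∈ Finset.range (n + 1),
        t (n + 1) (i + 1)
          = (x - i * lam) * t n i
            + (y - ((n - (i + 1) : ℕ) : ℝ) * lam) * t n (i + 1) := by
      intro i hi
      rw [Finset.mem_range, Nat.lt_succ_iff] at hi
      simp only [ht]
      rw [Nat.choose_succ_succ, Nat.succ_sub_succ]
      rcases Nat.lt_or_ge i n with h | h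
      · have h2 : n - i = (n - (i + 1)) + 1 := by omega
        rw [h2, degFall_succ lam y, degFall_succ lam x i]
        push_cast
        ring
      · have hin : i = n := le_antisymm hi h
        subst hin
        rw [Nat.choose_succ_self, Nat.sub_self, degFall_succ lam x]
        push_cast
        simp [degFall_zero]
        ring
    have key : ∑ i ∈ Finset.range (n + 1),
        (y - ((n - i : ℕ) : ℝ) * lam) * t n i
        = (∑ i ∈ Finset.range (n + 1),
            (y - ((n - (i + 1) : ℕ) : ℝ) * lam) * t n (i + 1))
          + degFall lam y (n + 1) := by
      have e1 : ∑ j ∈ Finset.range (n + 2), (y - ((n - j : ℕ) : ℝ) * lam) * t n j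
          = (∑ i ∈ Finset.range (n + 1),
              (y - ((n - (i + 1) : ℕ) : ℝ) * lam) * t n (i + 1))
            + (y - ((n : ℕ) : ℝ) * lam) * t n 0 := by
        rw [Finset.sum_range_succ']
        simp
      have e2 : ∑ j ∈ Finset.range (n + 2), (y - ((n - j : ℕ) : ℝ) * lam) * t n j
          = (∑ j ∈ Finset.range (n + 1), (y - ((n - j : ℕ) : ℝ) * lam) * t n j)
            + (y - ((n - (n + 1) : ℕ) : ℝ) * lam) * t n (n + 1) := by
        rw [Finset.sum_range_succ]
      rw [h_last, mul_zero, add_zero] at e2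
      rw [← e2, e1, h_first, degFall_succ]
      ring
    rw [degFall_succ, ih, Finset.sum_mul]
    rw [Finset.sum_range_succ' (fun m => t (n + 1) m) (n + 1)]
    rw [Finset.sum_congr rfl h_middle, Finset.sum_add_distrib]
    have h0 : t (n + 1) 0 = degFall lam y (n + 1) := h_first (n + 1)
    rw [h0, add_assoc, ← key]
    rw [← Finset.sum_add_distrib]
    apply Finset.sum_congr rfl
    intro i hi
    rw [Finset.mem_range, Nat.lt_succ_iff] at hi
    have hcast : ((n : ℕ) : ℝ) = (i : ℝ) + ((n - i : ℕ) : ℝ) := by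
      rw [Nat.cast_sub hi]; ring
    rw [show x + y - (n : ℝ) * lam
        = (x - i * lam) + (y - ((n - i : ℕ) : ℝ) * lam) by rw [hcast]; ring]
    ring

lemma multinomial_update_zero {k : ℕ} (a : Fin k) (t : Fin k → ℕ) :
    Nat.multinomial Finset.univ t
      = (∑ i, t i).choose (t a)
          * Nat.multinomial Finset.univ (Function.update t a 0) := by
  have hsum : ∑ i, t i = t a + ∑ i ∈ Finset.univ.erase a, t i :=
    (Finset.add_sum_erase Finset.univ t (Finset.mem_univ a)).symm
  have h1 : Nat.multinomial Finset.univ t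
      = (t a + ∑ i ∈ Finset.univ.erase a, t i).choose (t a)
          * Nat.multinomial (Finset.univ.erase a) t := by
    conv_lhs => rw [← Finset.insert_erase (Finset.mem_univ a)]
    rw [Nat.multinomial_insert (Finset.notMem_erase a Finset.univ)]
  have h2 : Nat.multinomial Finset.univ (Function.update t a 0)
      = Nat.multinomial (Finset.univ.erase a) t := by
    conv_lhs => rw [← Finset.insert_erase (Finset.mem_univ a)]
    rw [Nat.multinomial_insert (Finset.notMem_erase a Finset.univ)]
    rw [Function.update_self, Nat.choose_zero_right, one_mul]
    exact Nat.multinomial_congr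
      (fun i hi => Function.update_of_ne (Finset.ne_of_mem_erase hi) 0 t)
  rw [h1, h2, ← hsum]

lemma prod_degFall_update {k : ℕ} (lam : ℝ) (a : Fin k) (t : Fin k → ℕ) :
    ∏ i, degFall lam 1 (t i)
      = degFall lam 1 (t a) * ∏ i, degFall lam 1 (Function.update t a 0 i) := by
  rw [← Finset.mul_prod_erase Finset.univ (fun i => degFall lam 1 (t i))
    (Finset.mem_univ a)]
  rw [← Finset.mul_prod_erase Finset.univ (fun i => degFall lam 1 (Function.update t a 0 i))
    (Finset.mem_univ a)]
  rw [Function.update_self, degFall_zero, one_mul]  -- degFall lam 1 0 = 1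
  congr 1
  exact Finset.prod_congr rfl fun i hi => by
    rw [Function.update_of_ne (Finset.ne_of_mem_erase hi)]

lemma sum_supp (lam : ℝ) (k : ℕ) (s : Finset (Fin k)) :
    ∀ n : ℕ,
      ∑ t ∈ (Finset.Nat.antidiagonalTuple k n).filter (fun t => ∀ i ∉ s, t i = 0),
        (Nat.multinomial Finset.univ t : ℝ) * ∏ i, degFall lam 1 (t i)
      = degFall lam (s.card : ℝ) n := by
  classical
  induction s using Finset.induction_on with
  | empty =>
    intro n
    cases n with
    | zero =>
      rw [Finset.Nat.antidiagonalTuple_zero_right k]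
      rw [Finset.card_empty, Nat.cast_zero, degFall_zero]
      rw [Finset.filter_singleton]
      simp [degFall_zero, Nat.multinomial]
    | succ m =>
      rw [Finset.card_empty, Nat.cast_zero, degFall_zero_left]
      rw [Finset.filter_false_of_mem, Finset.sum_empty]
      intro t ht hall
      have hsum : ∑ i, t i = m + 1 := Finset.Nat.mem_antidiagonalTuple.mp ht
      have hz : ∀ i, t i = 0 := fun i => hall i (Finset.notMem_empty i)
      simp [hz] at hsum
  | @insert a s ha ih =>
    intro n
    have hmap : ∀ t ∈ (Finset.Nat.antidiagonalTuple k n).filter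
        (fun t => ∀ i ∉ insert a s, t i = 0), t a ∈ Finset.range (n + 1) := by
      intro t ht
      rw [Finset.mem_filter] at ht
      have hsum : ∑ i, t i = n := Finset.Nat.mem_antidiagonalTuple.mp ht.1
      have : t a ≤ n := hsum ▸ Finset.single_le_sum (fun i _ => Nat.zero_le _)
        (Finset.mem_univ a)
      exact Finset.mem_range.mpr (Nat.lt_succ_of_le this)
    rw [← Finset.sum_fiberwise_of_maps_to hmap]
    have hinner : ∀ m ∈ Finset.range (n + 1),
        (∑ t ∈ ((Finset.Nat.antidiagonalTuple k n).filter
            (fun t => ∀ i ∉ insert a s, t i = 0)).filter (fun t => t a = m),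
          (Nat.multinomial Finset.univ t : ℝ) * ∏ i, degFall lam 1 (t i))
        = (n.choose m : ℝ) * degFall lam 1 m * degFall lam (s.card : ℝ) (n - m) := by
      intro m hm
      rw [Finset.mem_range, Nat.lt_succ_iff] at hm
      rw [← ih (n - m), Finset.mul_sum]
      refine Finset.sum_nbij' (fun t => Function.update t a 0)
        (fun t' => Function.update t' a m) ?_ ?_ ?_ ?_ ?_
      · intro t ht
        rw [Finset.mem_filter, Finset.mem_filter] at ht
        obtain ⟨⟨hmem, hsupp⟩, hta⟩ := ht
        have hsum : ∑ i, t i = n := Finset.Nat.mem_antidiagonalTuple.mp hmem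
        rw [Finset.mem_filter]
        constructor
        · rw [Finset.Nat.mem_antidiagonalTuple]
          rw [Finset.sum_update_of_mem (Finset.mem_univ a)]
          have := Finset.add_sum_erase Finset.univ t (Finset.mem_univ a)
          rw [Finset.sdiff_singleton_eq_erase]
          omega
        · intro i hi
          rcases eq_or_ne i a with rfl | hne
          · simp
          · show Function.update t a 0 i = 0
            rw [Function.update_of_ne hne]
            exact hsupp i (by simp [hne, hi])
      · intro t' ht'
        rw [Finset.mem_filter] at ht'
        obtain ⟨hmem, hsupp⟩ := ht'
        have hsum : ∑ i, t' i = n - m := Finset.Nat.mem_antidiagonalTuple.mp hmem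
        have ht'a : t' a = 0 := hsupp a ha
        rw [Finset.mem_filter, Finset.mem_filter]
        refine ⟨⟨?_, ?_⟩, Function.update_self a m t'⟩
        · rw [Finset.Nat.mem_antidiagonalTuple]
          rw [Finset.sum_update_of_mem (Finset.mem_univ a)]
          have := Finset.add_sum_erase Finset.univ t' (Finset.mem_univ a)
          rw [Finset.sdiff_singleton_eq_erase]
          omega
        · intro i hi
          have hia : i ≠ a := fun h => hi (h ▸ Finset.mem_insert_self a s)
          show Function.update t' a m i = 0
          rw [Function.update_of_ne hia]
          exact hsupp i (fun h => hi (Finset.mem_insert_of_mem h))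
      · intro t ht
        rw [Finset.mem_filter] at ht
        show Function.update (Function.update t a 0) a m = t
        rw [Function.update_idem, ← ht.2, Function.update_eq_self]
      · intro t' ht'
        rw [Finset.mem_filter] at ht'
        have ht'a : t' a = 0 := ht'.2 a ha
        show Function.update (Function.update t' a m) a 0 = t'
        rw [Function.update_idem, ← ht'a, Function.update_eq_self]
      · intro t ht
        rw [Finset.mem_filter, Finset.mem_filter] at ht
        obtain ⟨⟨hmem, hsupp⟩, hta⟩ := ht
        have hsum : ∑ i, t i = n := Finset.Nat.mem_antidiagonalTuple.mp hmem
        rw [multinomial_update_zero a t, prod_degFall_update lam a t, hsum, hta]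
        push_cast
        ring
    rw [Finset.sum_congr rfl hinner]
    have hcast : ((insert a s).card : ℝ) = 1 + (s.card : ℝ) := by
      rw [Finset.card_insert_of_notMem ha]
      push_cast
      ring
    rw [hcast, degFall_add]

lemma indicator_pos {k : ℕ} (t : Fin k → ℕ) :
    (if ∀ i, 0 < t i then (1 : ℝ) else 0)
      = ∑ s ∈ (Finset.univ : Finset (Fin k)).powerset,
          (-1 : ℝ) ^ (k - s.card) * (if ∀ i ∉ s, t i = 0 then 1 else 0) := by
  classical
  have h1 : ∑ s ∈ (Finset.univ : Finset (Fin k)).powerset,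
      (-1 : ℝ) ^ (k - s.card) * (if ∀ i ∉ s, t i = 0 then 1 else 0)
      = ∑ s ∈ ((Finset.univ : Finset (Fin k)).powerset).filter
          (fun s => ∀ i ∉ s, t i = 0), (-1 : ℝ) ^ (k - s.card) := by
    rw [Finset.sum_filter]
    exact Finset.sum_congr rfl fun s _ => by rw [mul_ite, mul_one, mul_zero]
  set Z : Finset (Fin k) := Finset.univ.filter (fun i => t i = 0) with hZ
  have h2 : ∑ s ∈ ((Finset.univ : Finset (Fin k)).powerset).filter
      (fun s => ∀ i ∉ s, t i = 0), (-1 : ℝ) ^ (k - s.card)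
      = ∑ u ∈ Z.powerset, (-1 : ℝ) ^ u.card := by
    refine Finset.sum_nbij' (fun s => sᶜ) (fun u => uᶜ) ?_ ?_ ?_ ?_ ?_
    · intro s hs
      rw [Finset.mem_filter] at hs
      rw [Finset.mem_powerset]
      intro i hi
      rw [Finset.mem_compl] at hi
      rw [hZ, Finset.mem_filter]
      exact ⟨Finset.mem_univ i, hs.2 i hi⟩
    · intro u hu
      rw [Finset.mem_powerset] at hu
      rw [Finset.mem_filter, Finset.mem_powerset]
      refine ⟨Finset.subset_univ _, ?_⟩
      intro i hi
      rw [Finset.notMem_compl] at hi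
      have := hu hi
      rw [hZ, Finset.mem_filter] at this
      exact this.2
    · intro s _; exact compl_compl s
    · intro u _; exact compl_compl u
    · intro s hs
      congr 1
      rw [Finset.card_compl, Fintype.card_fin]
  have h3 : ∑ u ∈ Z.powerset, (-1 : ℝ) ^ u.card
      = if Z = ∅ then 1 else 0 := by
    have hint := Finset.sum_powerset_neg_one_pow_card (x := Z)
    have : ((∑ m ∈ Z.powerset, (-1 : ℤ) ^ m.card : ℤ) : ℝ)
        = ∑ u ∈ Z.powerset, (-1 : ℝ) ^ u.card := by push_cast; rfl
    rw [← this, hint]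
    split_ifs <;> simp
  rw [h1, h2, h3]
  have hiff : Z = ∅ ↔ ∀ i, 0 < t i := by
    rw [hZ, Finset.filter_eq_empty_iff]
    constructor
    · intro h i
      exact Nat.pos_of_ne_zero (h (Finset.mem_univ i))
    · intro h i _
      exact Nat.pos_iff_ne_zero.mp (h i)
  rw [if_congr hiff rfl rfl]

/-- Multinomial representation of the degenerate Stirling numbers of the second kind:
the sum ranges over all `k`-tuples of positive integers summing to `n`. -/
theorem degStirling_multinomial (lam : ℝ) (n k : ℕ) (hkn : k ≤ n) :
    degStirling lam n k =
      (1 / (Nat.factorial k : ℝ)) *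
        ∑ t ∈ (Finset.Nat.antidiagonalTuple k n).filter (fun t => ∀ i, 0 < t i),
          (Nat.multinomial Finset.univ t : ℝ) * ∏ i : Fin k, degFall lam 1 (t i) := by
  classical
  rw [degStirling]
  congr 1
  rw [Finset.sum_filter]
  have step1 : ∀ t ∈ Finset.Nat.antidiagonalTuple k n,
      (if ∀ i, 0 < t i then
          (Nat.multinomial Finset.univ t : ℝ) * ∏ i : Fin k, degFall lam 1 (t i) else 0)
      = ∑ s ∈ (Finset.univ : Finset (Fin k)).powerset,
          (-1 : ℝ) ^ (k - s.card) *
            (if ∀ i ∉ s, t i = 0 then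
              (Nat.multinomial Finset.univ t : ℝ) * ∏ i : Fin k, degFall lam 1 (t i) else 0) := by
    intro t _
    have h0 : (if ∀ i, 0 < t i then
        (Nat.multinomial Finset.univ t : ℝ) * ∏ i : Fin k, degFall lam 1 (t i) else 0)
        = (if ∀ i, 0 < t i then (1 : ℝ) else 0)
            * ((Nat.multinomial Finset.univ t : ℝ) * ∏ i : Fin k, degFall lam 1 (t i)) := by
      rw [ite_mul, one_mul, zero_mul]
    rw [h0, indicator_pos t, Finset.sum_mul]
    refine Finset.sum_congr rfl fun s _ => ?_
    rw [mul_assoc, ite_mul, one_mul, zero_mul]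
  rw [Finset.sum_congr rfl step1, Finset.sum_comm]
  have step2 : ∀ s ∈ (Finset.univ : Finset (Fin k)).powerset,
      (∑ t ∈ Finset.Nat.antidiagonalTuple k n,
        (-1 : ℝ) ^ (k - s.card) *
          (if ∀ i ∉ s, t i = 0 then
            (Nat.multinomial Finset.univ t : ℝ) * ∏ i : Fin k, degFall lam 1 (t i) else 0))
      = (-1 : ℝ) ^ (k - s.card) * degFall lam (s.card : ℝ) n := by
    intro s _
    rw [← Finset.mul_sum, ← Finset.sum_filter, sum_supp lam k s n]
  rw [Finset.sum_congr rfl step2]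
  have step3 := Finset.sum_powerset_apply_card
    (fun j => (-1 : ℝ) ^ (k - j) * degFall lam (j : ℝ) n)
    (x := (Finset.univ : Finset (Fin k)))
  simp only [Finset.card_univ, Fintype.card_fin] at step3
  rw [step3]
  refine Finset.sum_congr rfl fun j _ => ?_
  rw [nsmul_eq_mul]
  ring
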